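/- arXiv:1912.06820 — 5 statements merged into one kernel-verified Lean document; each statement's English description precedes it below -/
import Mathlib

section
/- Let n ≥ 1 be an integer and ψ : ℝⁿ → ℝⁿ a continuously differentiable map. Then the symmetrized Jacobian of ψ vanishes identically, i.e. ∇ψ(x) + (∇ψ(x))ᵀ = 0 for all x ∈ ℝⁿ, if and only if there exist a skew-symmetric n×n real matrix A and a vector b ∈ ℝⁿ such that ψ(x) = A·x + b for all x ∈ ℝⁿ. -/
/-!
A skew Jacobian gives `Dψ(z) v ⬝ᵥ v = 0`, so `t ↦ ψ (y + t • (x - y)) ⬝ᵥ (x - y)` is constant and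
`(ψ x - ψ y) ⬝ᵥ (x - y) = 0` for all `x, y`. This identity alone forces `ψ` to be affine: expanding
it shows that `φ = ψ - ψ 0` satisfies `φ x ⬝ᵥ y = -(φ y ⬝ᵥ x)`, whose right side is linear in `x`,
so `φ` is linear because the dot product is nondegenerate.
-/

open Matrix

theorem Matrix.transpose_eq_neg_iff_mulVec_dotProduct {ι R : Type*} [Fintype ι] [DecidableEq ι]
    [CommRing R] {A : Matrix ι ι R} :
    Aᵀ = -A ↔ ∀ x y, A *ᵥ x ⬝ᵥ y = -(A *ᵥ y ⬝ᵥ x) := by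
  constructor
  · intro hA x y
    rw [dotProduct_comm, dotProduct_mulVec, ← mulVec_transpose, hA, neg_mulVec, neg_dotProduct]
  · intro h
    ext i j
    simpa [mulVec_single_one, dotProduct_single_one, eq_neg_iff_add_eq_zero, add_comm]
      using h (Pi.single i 1) (Pi.single j 1)

theorem Matrix.separatingLeft_dotProductBilin {ι R : Type*} [Fintype ι] [DecidableEq ι]
    [CommSemiring R] : (dotProductBilin R R : (ι → R) →ₗ[R] (ι → R) →ₗ[R] R).SeparatingLeft :=
  fun u hu => funext fun i => by simpa [dotProduct_single_one] using hu (Pi.single i 1)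

theorem LinearMap.SeparatingLeft.exists_linearMap_of_apply_sub_sub_eq_zero
    {R M : Type*} [CommRing R] [AddCommGroup M] [Module R M] {B : M →ₗ[R] M →ₗ[R] R}
    (hB : B.SeparatingLeft) {φ : M → M} (h : ∀ x y, B (φ x - φ y) (x - y) = 0) :
    ∃ L : M →ₗ[R] M, (∀ x y, B (L x) y = -B (L y) x) ∧ ∀ x, φ x = L x + φ 0 := by
  set L₀ := fun x => φ x - φ 0
  have skew : ∀ x y, B (L₀ x) y = -B (L₀ y) x := by
    intro x y
    have hxy := h x y
    have hx := h x 0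
    have hy := h y 0
    simp only [L₀, map_sub, LinearMap.sub_apply, sub_zero] at hxy hx hy ⊢
    linear_combination hx + hy - hxy
  have ext_left : ∀ u u', (∀ y, B u y = B u' y) → u = u' := fun u u' huu =>
    sub_eq_zero.1 <| hB _ fun y => by rw [map_sub, LinearMap.sub_apply, huu, sub_self]
  refine ⟨{ toFun := L₀, map_add' := ?_, map_smul' := ?_ }, skew,
    fun x => (sub_add_cancel (φ x) (φ 0)).symm⟩
  · intro x x'
    refine ext_left _ _ fun y => ?_
    rw [map_add, LinearMap.add_apply, skew (x + x'), skew x, skew x', map_add]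
    ring
  · intro c x
    refine ext_left _ _ fun y => ?_
    rw [map_smul, LinearMap.smul_apply, skew (c • x), skew x, map_smul, smul_eq_mul, smul_eq_mul,
      RingHom.id_apply]
    ring

theorem LinearMap.apply_sub_sub_eq_zero_of_apply_fderiv_self_eq_zero {E F : Type*}
    [NormedAddCommGroup E] [NormedSpace ℝ E] [NormedAddCommGroup F] [NormedSpace ℝ F]
    [FiniteDimensional ℝ F] {ψ : E → F} (hψ : Differentiable ℝ ψ) (B : F →ₗ[ℝ] E →ₗ[ℝ] ℝ)
    (h : ∀ z v, B (fderiv ℝ ψ z v) v = 0) (x y : E) : B (ψ x - ψ y) (x - y) = 0 := by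
  set v := x - y
  let ℓ : F →L[ℝ] ℝ := LinearMap.toContinuousLinearMap (B.flip v)
  have hderiv : ∀ t : ℝ, HasDerivAt (fun t : ℝ => ℓ (ψ (y + t • v))) 0 t := by
    intro t
    have hline : HasDerivAt (fun t : ℝ => y + t • v) v t := by
      simpa using ((hasDerivAt_id t).smul_const v).const_add y
    have := ℓ.hasFDerivAt.comp_hasDerivAt t ((hψ _).hasFDerivAt.comp_hasDerivAt t hline)
    simp only [ℓ, LinearMap.coe_toContinuousLinearMap', LinearMap.flip_apply, h] at this
    exact this
  have := is_const_of_deriv_eq_zero (fun t => (hderiv t).differentiableAt)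
    (fun t => (hderiv t).deriv) 1 0
  simpa [ℓ, v, sub_eq_zero] using this

theorem rigid_displacement_characterization_general (n : ℕ)
    (ψ : (Fin n → ℝ) → (Fin n → ℝ)) (hψ : ContDiff ℝ 1 ψ) :
    (∀ (x : Fin n → ℝ) (i j : Fin n),
        fderiv ℝ ψ x (Pi.single j 1) i + fderiv ℝ ψ x (Pi.single i 1) j = 0)
    ↔ ∃ (A : Matrix (Fin n) (Fin n) ℝ) (b : Fin n → ℝ),
        Aᵀ = -A ∧ ∀ x, ψ x = A.mulVec x + b := by
  constructor
  · intro H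
    set J := fun x => LinearMap.toMatrix' (fderiv ℝ ψ x : (Fin n → ℝ) →ₗ[ℝ] Fin n → ℝ)
    have hJ : ∀ x, (J x)ᵀ = -J x := fun x => by
      ext i j
      simp only [J, transpose_apply, Matrix.neg_apply, LinearMap.toMatrix'_apply,
        ContinuousLinearMap.coe_coe]
      linarith [H x i j]
    have hquad : ∀ z v, dotProductBilin ℝ ℝ (fderiv ℝ ψ z v) v = 0 := fun z v => by
      have := transpose_eq_neg_iff_mulVec_dotProduct.1 (hJ z) v v
      simp only [J, LinearMap.toMatrix'_mulVec, ContinuousLinearMap.coe_coe] at this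
      simpa using self_eq_neg.1 this
    obtain ⟨L, hL, hψL⟩ := separatingLeft_dotProductBilin.exists_linearMap_of_apply_sub_sub_eq_zero
      ((dotProductBilin ℝ ℝ).apply_sub_sub_eq_zero_of_apply_fderiv_self_eq_zero
        (hψ.differentiable one_ne_zero) hquad)
    refine ⟨LinearMap.toMatrix' L, ψ 0, transpose_eq_neg_iff_mulVec_dotProduct.2 ?_, ?_⟩
    · simpa using hL
    · simpa using hψL
  · rintro ⟨A, b, hA, hψA⟩ x i j
    have hfd : fderiv ℝ ψ x = (mulVecLin A).toContinuousLinearMap := by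
      rw [funext hψA]
      exact ((mulVecLin A).toContinuousLinearMap.hasFDerivAt.add_const b).fderiv
    have hAij := congr_fun₂ hA j i
    simp only [transpose_apply, Matrix.neg_apply] at hAij
    simp [hfd, hAij]

/-- A `C¹` map `ψ : ℝⁿ → ℝⁿ` has identically vanishing symmetrized
Jacobian, i.e. `∂_j ψ^i(x) + ∂_i ψ^j(x) = 0` for all `x, i, j`, if and only if there
exist a skew-symmetric matrix `A` and a vector `b` with `ψ(x) = A·x + b` for all `x`. -/
theorem rigid_displacement_characterization (n : ℕ) (hn : 1 ≤ n)
    (ψ : (Fin n → ℝ) → (Fin n → ℝ)) (hψ : ContDiff ℝ 1 ψ) :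
    (∀ (x : Fin n → ℝ) (i j : Fin n),
        fderiv ℝ ψ x (Pi.single j 1) i + fderiv ℝ ψ x (Pi.single i 1) j = 0)
    ↔ ∃ (A : Matrix (Fin n) (Fin n) ℝ) (b : Fin n → ℝ),
        Aᵀ = -A ∧ ∀ x, ψ x = A.mulVec x + b :=
  rigid_displacement_characterization_general n ψ hψ
end

section
/- For every integer n ≥ 1 there exist constants γ̄(n) > 1 and C(n) > 1, depending only on n, with the following property. Let 0 < θ < 1, γ₁ > 1, γ₃ > 1 and 0 < γ₂ ≤ 1, and let A, D be invertible n×n real matrices and B, C arbitrary n×n real matrices satisfying ‖A⁻¹‖ ≤ 1/(θγ₁), ‖B‖ + ‖C‖ ≤ 1/(θγ₂) and ‖D⁻¹‖ ≤ 1/(θγ₃), where ‖·‖ is the operator norm. If γ₁γ₂² ≥ γ̄(n)/θ⁴, then the 2n×2n block matrix M with blocks (A B; C D) is invertible, and the four n×n blocks E₁₁, E₁₂, E₂₁, E₂₂ of the block matrix M⁻¹ − (A⁻¹ 0; 0 D⁻¹) satisfy ‖E₁₁‖ ≤ C(n)/(θ⁵γ₁²γ₂²), ‖E₁₂‖ ≤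 C(n)/(θ³γ₁γ₂), ‖E₂₁‖ ≤ C(n)/(θ³γ₁γ₂), and ‖E₂₂‖ ≤ C(n)/(θ⁵γ₁γ₂²γ₃²). -/
/-!
The Schur complement `S = D - C A⁻¹ B` factors as `D (1 - T)` with `T = D⁻¹ C A⁻¹ B`, and
`‖T‖ ≤ 1 / (θ⁴ γ₁ γ₂² γ₃) ≤ 1/2` once `θ⁴ γ₁ γ₂² ≥ 2`. Hence `S` is invertible with
`‖S⁻¹‖ ≤ 2 ‖D⁻¹‖`, and so is `M = (A B; C D)`. Subtracting `(A⁻¹ 0; 0 D⁻¹)` from the Schur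
complement formula for `M⁻¹` leaves the blocks `A⁻¹ B S⁻¹ C A⁻¹`, `-A⁻¹ B S⁻¹`, `-S⁻¹ C A⁻¹`
and `S⁻¹ C A⁻¹ B D⁻¹`, whose norms are bounded by the products of the norms of their factors.
One may take `γ̄(n) = C(n) = 2`.
-/

open Matrix

/-- The operator norm of a square real matrix, induced by the Euclidean norm on `ℝⁿ`. -/
noncomputable def matOpNorm {m : Type*} [Fintype m] [DecidableEq m]
    (M : Matrix m m ℝ) : ℝ :=
  ‖(Matrix.toEuclideanCLM (𝕜 := ℝ) M : EuclideanSpace ℝ m →L[ℝ] EuclideanSpace ℝ m)‖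

open scoped Ring

theorem isUnit_sub_and_norm_inverse_sub_le {R : Type*} [NormedRing R] [HasSummableGeomSeries R]
    {d x : R} (hd : IsUnit d) (hx : ‖d⁻¹ʳ * x‖ ≤ 1 / 2) :
    IsUnit (d - x) ∧ ‖(d - x)⁻¹ʳ‖ ≤ 2 * ‖d⁻¹ʳ‖ := by
  have hfactor : d - x = d * (1 - d⁻¹ʳ * x) := by
    rw [mul_sub, mul_one, Ring.mul_inverse_cancel_left d x hd]
  have hu : IsUnit (d - x) :=
    hfactor ▸ hd.mul (isUnit_one_sub_of_norm_lt_one (by linarith))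
  refine ⟨hu, ?_⟩
  have hexpand : (d - x)⁻¹ʳ = d⁻¹ʳ + d⁻¹ʳ * x * (d - x)⁻¹ʳ := by
    have : d⁻¹ʳ * (d - x) * (d - x)⁻¹ʳ = d⁻¹ʳ := Ring.mul_inverse_cancel_right _ _ hu
    rw [mul_sub, Ring.inverse_mul_cancel d hd, sub_mul, one_mul] at this
    exact sub_eq_iff_eq_add.mp this
  have hle : ‖(d - x)⁻¹ʳ‖ ≤ ‖d⁻¹ʳ‖ + ‖d⁻¹ʳ * x‖ * ‖(d - x)⁻¹ʳ‖ := by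
    calc ‖(d - x)⁻¹ʳ‖ = ‖d⁻¹ʳ + d⁻¹ʳ * x * (d - x)⁻¹ʳ‖ := congrArg _ hexpand
      _ ≤ _ := (norm_add_le _ _).trans (add_le_add le_rfl (norm_mul_le _ _))
  nlinarith [norm_nonneg (d - x)⁻¹ʳ]

section SchurComplement

variable {α : Type*} [CommRing α] {m n : Type*} [Fintype m] [DecidableEq m] [Fintype n]
  [DecidableEq n] {A : Matrix m m α} {B : Matrix m n α} {C : Matrix n m α} {D : Matrix n n α}

theorem isUnit_fromBlocks_and_inv_eq_of_isUnit₁₁ (hA : IsUnit A)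
    (hS : IsUnit (D - C * A⁻¹ * B)) :
    IsUnit (fromBlocks A B C D) ∧ (fromBlocks A B C D)⁻¹ =
      fromBlocks (A⁻¹ + A⁻¹ * B * (D - C * A⁻¹ * B)⁻¹ * C * A⁻¹)
        (-(A⁻¹ * B * (D - C * A⁻¹ * B)⁻¹)) (-((D - C * A⁻¹ * B)⁻¹ * C * A⁻¹))
        (D - C * A⁻¹ * B)⁻¹ := by
  let := hA.invertible
  rw [← invOf_eq_nonsing_inv (A := A)] at hS ⊢
  let := hS.invertible
  let := fromBlocks₁₁Invertible A B C D
  refine ⟨isUnit_of_invertible _, ?_⟩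
  rw [← invOf_eq_nonsing_inv, invOf_fromBlocks₁₁_eq]
  simp only [invOf_eq_nonsing_inv]

theorem inv_fromBlocks_sub_fromBlocks_inv (hA : IsUnit A) (hD : IsUnit D)
    (hS : IsUnit (D - C * A⁻¹ * B)) :
    (fromBlocks A B C D)⁻¹ - fromBlocks A⁻¹ 0 0 D⁻¹ =
      fromBlocks (A⁻¹ * B * (D - C * A⁻¹ * B)⁻¹ * C * A⁻¹)
        (-(A⁻¹ * B * (D - C * A⁻¹ * B)⁻¹)) (-((D - C * A⁻¹ * B)⁻¹ * C * A⁻¹))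
        ((D - C * A⁻¹ * B)⁻¹ * (C * A⁻¹ * B) * D⁻¹) := by
  rw [(isUnit_fromBlocks_and_inv_eq_of_isUnit₁₁ hA hS).2, sub_eq_iff_eq_add, fromBlocks_add]
  congr 1
  · exact add_comm _ _
  · exact (add_zero _).symm
  · exact (add_zero _).symm
  · set S := D - C * A⁻¹ * B
    rw [show C * A⁻¹ * B = D - S from (sub_sub_cancel D _).symm, mul_sub, sub_mul,
      mul_nonsing_inv_cancel_right _ _ ((isUnit_iff_isUnit_det D).mp hD),
      nonsing_inv_mul _ ((isUnit_iff_isUnit_det S).mp hS), one_mul, sub_add_cancel]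

end SchurComplement

open scoped Matrix.Norms.L2Operator

theorem isUnit_sub_and_norm_nonsing_inv_sub_le {𝕜 m : Type*} [RCLike 𝕜] [Fintype m]
    [DecidableEq m] {D X : Matrix m m 𝕜} (hD : IsUnit D) (hX : ‖D⁻¹ * X‖ ≤ 1 / 2) :
    IsUnit (D - X) ∧ ‖(D - X)⁻¹‖ ≤ 2 * ‖D⁻¹‖ := by
  simp only [nonsing_inv_eq_ringInverse] at hX ⊢
  exact isUnit_sub_and_norm_inverse_sub_le hD hX

theorem matOpNorm_eq_norm {m : Type*} [Fintype m] [DecidableEq m] (M : Matrix m m ℝ) :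
    matOpNorm M = ‖M‖ := rfl

theorem block_matrix_inverse_estimate_general (n : ℕ) :
    ∃ γbar Cn : ℝ, 1 < γbar ∧ 1 < Cn ∧
    ∀ (θ γ₁ γ₂ γ₃ : ℝ), 0 < θ → θ < 1 → 1 < γ₁ → 0 < γ₂ → γ₂ ≤ 1 → 1 < γ₃ →
    ∀ A B C D : Matrix (Fin n) (Fin n) ℝ, IsUnit A → IsUnit D →
      matOpNorm A⁻¹ ≤ 1 / (θ * γ₁) →
      matOpNorm B + matOpNorm C ≤ 1 / (θ * γ₂) →
      matOpNorm D⁻¹ ≤ 1 / (θ * γ₃) →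
      γbar / θ ^ 4 ≤ γ₁ * γ₂ ^ 2 →
      IsUnit (Matrix.fromBlocks A B C D) ∧
      matOpNorm (((Matrix.fromBlocks A B C D)⁻¹
          - Matrix.fromBlocks A⁻¹ 0 0 D⁻¹).toBlocks₁₁)
        ≤ Cn / (θ ^ 5 * γ₁ ^ 2 * γ₂ ^ 2) ∧
      matOpNorm (((Matrix.fromBlocks A B C D)⁻¹
          - Matrix.fromBlocks A⁻¹ 0 0 D⁻¹).toBlocks₁₂)
        ≤ Cn / (θ ^ 3 * γ₁ * γ₂) ∧
      matOpNorm (((Matrix.fromBlocks A B C D)⁻¹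
          - Matrix.fromBlocks A⁻¹ 0 0 D⁻¹).toBlocks₂₁)
        ≤ Cn / (θ ^ 3 * γ₁ * γ₂) ∧
      matOpNorm (((Matrix.fromBlocks A B C D)⁻¹
          - Matrix.fromBlocks A⁻¹ 0 0 D⁻¹).toBlocks₂₂)
        ≤ Cn / (θ ^ 5 * γ₁ * γ₂ ^ 2 * γ₃ ^ 2) := by
  refine ⟨2, 2, one_lt_two, one_lt_two, ?_⟩
  intro θ γ₁ γ₂ γ₃ hθ _ hγ₁ hγ₂ _ hγ₃ A B C D hA hD hAinv hBC hDinv hγ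
  simp only [matOpNorm_eq_norm] at hAinv hBC hDinv ⊢
  have hB : ‖B‖ ≤ 1 / (θ * γ₂) := by linarith [norm_nonneg C]
  have hC : ‖C‖ ≤ 1 / (θ * γ₂) := by linarith [norm_nonneg B]
  have hγ' : 2 ≤ θ ^ 4 * γ₁ * γ₂ ^ 2 * γ₃ := by
    rw [div_le_iff₀ (by positivity)] at hγ
    nlinarith [mul_pos (mul_pos (pow_pos hθ 4) (one_pos.trans hγ₁)) (pow_pos hγ₂ 2)]
  have hT : ‖D⁻¹ * (C * A⁻¹ * B)‖ ≤ 1 / 2 := by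
    calc ‖D⁻¹ * (C * A⁻¹ * B)‖
        ≤ 1 / (θ * γ₃) * (1 / (θ * γ₂) * (1 / (θ * γ₁)) * (1 / (θ * γ₂))) :=
          norm_mul_le_of_le hDinv (norm_mul_le_of_le (norm_mul_le_of_le hC hAinv) hB)
      _ = 1 / (θ ^ 4 * γ₁ * γ₂ ^ 2 * γ₃) := by ring
      _ ≤ 1 / 2 := one_div_le_one_div_of_le two_pos hγ'
  obtain ⟨hS, hSinv⟩ := isUnit_sub_and_norm_nonsing_inv_sub_le hD hT
  set S := D - C * A⁻¹ * B
  have hSγ₃ : ‖S⁻¹‖ ≤ 2 / (θ * γ₃) :=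
    hSinv.trans ((mul_le_mul_of_nonneg_left hDinv zero_le_two).trans_eq (mul_one_div _ _))
  have hSθ : ‖S⁻¹‖ ≤ 2 / θ :=
    hSγ₃.trans (div_le_div_of_nonneg_left zero_le_two hθ (le_mul_of_one_le_right hθ.le hγ₃.le))
  rw [inv_fromBlocks_sub_fromBlocks_inv hA hD hS]
  simp only [toBlocks_fromBlocks₁₁, toBlocks_fromBlocks₁₂, toBlocks_fromBlocks₂₁,
    toBlocks_fromBlocks₂₂, norm_neg]
  refine ⟨(isUnit_fromBlocks_and_inv_eq_of_isUnit₁₁ hA hS).1, ?_, ?_, ?_, ?_⟩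
  · exact (norm_mul_le_of_le (norm_mul_le_of_le (norm_mul_le_of_le (norm_mul_le_of_le
      hAinv hB) hSθ) hC) hAinv).trans_eq (by ring)
  · exact (norm_mul_le_of_le (norm_mul_le_of_le hAinv hB) hSθ).trans_eq (by ring)
  · exact (norm_mul_le_of_le (norm_mul_le_of_le hSθ hC) hAinv).trans_eq (by ring)
  · exact (norm_mul_le_of_le (norm_mul_le_of_le hSγ₃ (norm_mul_le_of_le
      (norm_mul_le_of_le hC hAinv) hB)) hDinv).trans_eq (by ring)

/-- Block matrix inversion estimate: for every `n ≥ 1` there are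
constants `γ̄(n) > 1` and `C(n) > 1` such that whenever `0 < θ < 1`, `γ₁, γ₃ > 1`,
`0 < γ₂ ≤ 1`, `A, D` are invertible `n × n` matrices with `‖A⁻¹‖ ≤ 1/(θγ₁)`,
`‖B‖ + ‖C‖ ≤ 1/(θγ₂)`, `‖D⁻¹‖ ≤ 1/(θγ₃)`, and `γ₁γ₂² ≥ γ̄(n)/θ⁴`, the block matrix
`(A B; C D)` is invertible and the blocks of `(A B; C D)⁻¹ − (A⁻¹ 0; 0 D⁻¹)` obey
the stated operator norm bounds. -/
theorem block_matrix_inverse_estimate (n : ℕ) (hn : 1 ≤ n) :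
    ∃ γbar Cn : ℝ, 1 < γbar ∧ 1 < Cn ∧
    ∀ (θ γ₁ γ₂ γ₃ : ℝ), 0 < θ → θ < 1 → 1 < γ₁ → 0 < γ₂ → γ₂ ≤ 1 → 1 < γ₃ →
    ∀ A B C D : Matrix (Fin n) (Fin n) ℝ, IsUnit A → IsUnit D →
      matOpNorm A⁻¹ ≤ 1 / (θ * γ₁) →
      matOpNorm B + matOpNorm C ≤ 1 / (θ * γ₂) →
      matOpNorm D⁻¹ ≤ 1 / (θ * γ₃) →
      γbar / θ ^ 4 ≤ γ₁ * γ₂ ^ 2 →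
      IsUnit (Matrix.fromBlocks A B C D) ∧
      matOpNorm (((Matrix.fromBlocks A B C D)⁻¹
          - Matrix.fromBlocks A⁻¹ 0 0 D⁻¹).toBlocks₁₁)
        ≤ Cn / (θ ^ 5 * γ₁ ^ 2 * γ₂ ^ 2) ∧
      matOpNorm (((Matrix.fromBlocks A B C D)⁻¹
          - Matrix.fromBlocks A⁻¹ 0 0 D⁻¹).toBlocks₁₂)
        ≤ Cn / (θ ^ 3 * γ₁ * γ₂) ∧
      matOpNorm (((Matrix.fromBlocks A B C D)⁻¹
          - Matrix.fromBlocks A⁻¹ 0 0 D⁻¹).toBlocks₂₁)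
        ≤ Cn / (θ ^ 3 * γ₁ * γ₂) ∧
      matOpNorm (((Matrix.fromBlocks A B C D)⁻¹
          - Matrix.fromBlocks A⁻¹ 0 0 D⁻¹).toBlocks₂₂)
        ≤ Cn / (θ ^ 5 * γ₁ * γ₂ ^ 2 * γ₃ ^ 2) :=
  block_matrix_inverse_estimate_general n
end

section
/- Let n ≥ 2, m ≥ 2 and k ≥ 0 be integers with m > n + k − 1, and let R > 0. There exist a constant C ≥ 1 and ε₀ ∈ (0,1) such that for all 0 < ε < ε₀, C⁻¹·ε^{(n+k−1)/m − 1} ≤ ∫_{B'_R} |x'|^k / (ε + |x'|^m) dx' ≤ C·ε^{(n+k−1)/m − 1}. -/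
open MeasureTheory Set Metric
open scoped Pointwise

lemma aux_ratio_bound (m k : ℕ) (r : ℝ) (hr : 0 ≤ r) :
    r ^ k / (1 + r ^ m) ≤ 2 ^ m * (1 + r) ^ (-((m : ℝ) - k)) := by
  have h1r : (0:ℝ) < 1 + r := by linarith
  have key : (1 + r) ^ (-((m : ℝ) - k)) = (1 + r) ^ k / (1 + r) ^ m := by
    rw [neg_sub, Real.rpow_sub h1r, Real.rpow_natCast, Real.rpow_natCast]
  rw [key, mul_div_assoc']
  have hden : (0:ℝ) < 1 + r ^ m := by positivity
  rw [div_le_div_iff₀ hden (by positivity)]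
  have e1 : r ^ k ≤ (1 + r) ^ k := pow_le_pow_left₀ hr (by linarith) k
  have e2 : (1 + r) ^ m ≤ 2 ^ m * (1 + r ^ m) := by
    have h2 : 1 + r ≤ 2 * max 1 r := by
      have := le_max_left (1:ℝ) r; have := le_max_right (1:ℝ) r; linarith
    calc (1 + r) ^ m ≤ (2 * max 1 r) ^ m := pow_le_pow_left₀ (by linarith) h2 m
      _ = 2 ^ m * (max 1 r) ^ m := mul_pow 2 _ m
      _ ≤ 2 ^ m * (1 + r ^ m) := by
          gcongr
          rcases le_total r 1 with h | h
          · rw [max_eq_left h]; simp; positivity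
          · rw [max_eq_right h]; nlinarith [pow_nonneg hr m]
  calc r ^ k * (1 + r) ^ m ≤ (1 + r) ^ k * (2 ^ m * (1 + r ^ m)) := by
        apply mul_le_mul e1 e2 (by positivity) (by positivity)
    _ = 2 ^ m * (1 + r) ^ k * (1 + r ^ m) := by ring

/-- For integers `n ≥ 2`, `m ≥ 2`, `k ≥ 0` with `m > n + k − 1` and
`R > 0`, there are `C ≥ 1` and `ε₀ ∈ (0,1)` such that for all `0 < ε < ε₀`,
`C⁻¹ ε^{(n+k−1)/m − 1} ≤ ∫_{B'_R} |x'|^k/(ε + |x'|^m) dx' ≤ C ε^{(n+k−1)/m − 1}`. -/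
theorem ball_integral_supercritical (n m k : ℕ) (hn : 2 ≤ n) (hm : 2 ≤ m)
    (hmk : n + k - 1 < m) (R : ℝ) (hR : 0 < R) :
    ∃ C : ℝ, 1 ≤ C ∧ ∃ ε₀ : ℝ, 0 < ε₀ ∧ ε₀ < 1 ∧
      ∀ ε : ℝ, 0 < ε → ε < ε₀ →
        C⁻¹ * ε ^ (((n : ℝ) + k - 1) / m - 1)
            ≤ ∫ x in Metric.ball (0 : EuclideanSpace ℝ (Fin (n - 1))) R,
                ‖x‖ ^ k / (ε + ‖x‖ ^ m)
        ∧ (∫ x in Metric.ball (0 : EuclideanSpace ℝ (Fin (n - 1))) R,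
                ‖x‖ ^ k / (ε + ‖x‖ ^ m))
            ≤ C * ε ^ (((n : ℝ) + k - 1) / m - 1) := by
  set d := n - 1 with hd
  have hd1 : 1 ≤ d := by omega
  have hdk : d + k < m := by omega
  have hmr : (0:ℝ) < m := by positivity
  set E := EuclideanSpace ℝ (Fin d) with hE
  have hrank : Module.finrank ℝ E = d := finrank_euclideanSpace_fin
  haveI : Nontrivial E := Module.nontrivial_of_finrank_pos (R := ℝ) (by rw [hrank]; omega)
  set g : E → ℝ := fun y => ‖y‖ ^ k / (1 + ‖y‖ ^ m) with hgdef
  have hg_nonneg : ∀ y, 0 ≤ g y := fun y => by positivity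
  have hg_cont : Continuous g := by
    apply Continuous.div (by fun_prop) (by fun_prop)
    intro y; positivity
  have hg_int : Integrable g := by
    have h1 : Integrable (fun y : E => (2:ℝ)^m * (1 + ‖y‖) ^ (-((m:ℝ) - k))) := by
      refine (integrable_one_add_norm ?_).const_mul _
      rw [hrank]
      have : ((d + k : ℕ) : ℝ) < m := by exact_mod_cast hdk
      push_cast at this ⊢; linarith
    refine h1.mono' hg_cont.aestronglyMeasurable (Filter.Eventually.of_forall fun y => ?_)
    rw [Real.norm_of_nonneg (hg_nonneg y)]
    exact aux_ratio_bound m k ‖y‖ (norm_nonneg y)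
  set I1 := ∫ y in ball (0:E) 1, g y with hI1
  set If := ∫ y, g y with hIf
  have hI1pos : 0 < I1 := by
    rw [hI1, setIntegral_pos_iff_support_of_nonneg_ae
      (Filter.Eventually.of_forall hg_nonneg) hg_int.integrableOn]
    have hsub : ball (0:E) 1 \ {0} ⊆ Function.support g ∩ ball (0:E) 1 := by
      intro y hy
      refine ⟨?_, hy.1⟩
      have hy0 : y ≠ 0 := hy.2
      have : 0 < g y := by
        rw [hgdef]; simp only
        have : 0 < ‖y‖ := norm_pos_iff.mpr hy0
        positivity
      exact this.ne'
    calc (0:ENNReal) < volume (ball (0:E) 1) := measure_ball_pos volume 0 one_pos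
      _ = volume (ball (0:E) 1 \ {0}) := (measure_diff_null (measure_singleton 0)).symm
      _ ≤ volume (Function.support g ∩ ball (0:E) 1) := measure_mono hsub
  have hI1f : I1 ≤ If := setIntegral_le_integral hg_int (Filter.Eventually.of_forall hg_nonneg)
  set C := max 1 (max If I1⁻¹) with hC
  have hC1 : (1:ℝ) ≤ C := le_max_left _ _
  have hCpos : (0:ℝ) < C := lt_of_lt_of_le one_pos hC1
  refine ⟨C, hC1, min (1/2) (R ^ m), by positivity, ?_, ?_⟩
  · calc min (1/2 : ℝ) (R ^ m) ≤ 1/2 := min_le_left _ _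
      _ < 1 := by norm_num
  intro ε hε hεlt
  have hεR : ε < R ^ m := lt_of_lt_of_le hεlt (min_le_right _ _)
  set t := ε ^ ((1:ℝ)/m) with ht
  have ht0 : 0 < t := Real.rpow_pos_of_pos hε _
  have htm : t ^ m = ε := by
    rw [ht, ← Real.rpow_natCast (ε ^ ((1:ℝ)/m)) m, ← Real.rpow_mul hε.le,
      one_div, inv_mul_cancel₀ hmr.ne', Real.rpow_one]
  have htR : t < R := by
    have h1 : t ^ m < R ^ m := by rw [htm]; exact hεR
    exact lt_of_pow_lt_pow_left₀ m hR.le h1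
  set θ := ((n : ℝ) + k - 1) / m - 1 with hθ
  have hdr : ((d : ℕ) : ℝ) = (n : ℝ) - 1 := by
    rw [hd, Nat.cast_sub (by omega)]; simp
  have hεθ : 0 < ε ^ θ := Real.rpow_pos_of_pos hε _
  -- pointwise identity
  have hpt : ∀ x : E, ‖x‖ ^ k / (ε + ‖x‖ ^ m) = (t ^ k / ε) * g (t⁻¹ • x) := by
    intro x
    have hnorm : ‖t⁻¹ • x‖ = t⁻¹ * ‖x‖ := by
      rw [norm_smul, Real.norm_of_nonneg (by positivity)]
    rw [hgdef]; simp only [hnorm]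
    rw [mul_pow, mul_pow, inv_pow, inv_pow, htm]
    have hden : (0:ℝ) < ε + ‖x‖ ^ m := by positivity
    have htk : (0:ℝ) < t ^ k := by positivity
    field_simp
  -- coefficient identity
  have hcoef : (t ^ k / ε) * t ^ d = ε ^ θ := by
    have h1 : t ^ k * t ^ d = ε ^ (((d:ℝ) + k) / m) := by
      rw [← pow_add, ht, ← Real.rpow_natCast (ε ^ ((1:ℝ)/m)) (k + d), ← Real.rpow_mul hε.le]
      congr 1
      push_cast
      field_simp
      ring
    have h2 : θ = ((d:ℝ) + k) / m - 1 := by rw [hθ, hdr]; ring_nf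
    rw [div_mul_eq_mul_div, h1, h2, Real.rpow_sub hε, Real.rpow_one]
  -- transform the integral
  have key : (∫ x in ball (0:E) R, ‖x‖ ^ k / (ε + ‖x‖ ^ m))
      = ε ^ θ * ∫ y in ball (0:E) (t⁻¹ * R), g y := by
    calc (∫ x in ball (0:E) R, ‖x‖ ^ k / (ε + ‖x‖ ^ m))
        = ∫ x in ball (0:E) R, (t ^ k / ε) * g (t⁻¹ • x) := by simp_rw [hpt]
      _ = (t ^ k / ε) * ∫ x in ball (0:E) R, g (t⁻¹ • x) := integral_const_mul _ _
      _ = (t ^ k / ε) * (((t⁻¹) ^ Module.finrank ℝ E)⁻¹ •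
            ∫ y in t⁻¹ • ball (0:E) R, g y) := by
          rw [Measure.setIntegral_comp_smul_of_pos volume g _ (inv_pos.2 ht0)]
      _ = ε ^ θ * ∫ y in ball (0:E) (t⁻¹ * R), g y := by
          rw [hrank, inv_pow, inv_inv, smul_eq_mul]
          rw [_root_.smul_ball (inv_ne_zero ht0.ne') (0:E) R, smul_zero,
            Real.norm_of_nonneg (by positivity)]
          rw [← mul_assoc, hcoef]
  rw [key]
  have hsub : ball (0:E) 1 ⊆ ball (0:E) (t⁻¹ * R) := by
    apply ball_subset_ball
    rw [← div_eq_inv_mul, le_div_iff₀ ht0]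
    linarith
  have hIb_ge : I1 ≤ ∫ y in ball (0:E) (t⁻¹ * R), g y := by
    refine setIntegral_mono_set hg_int.integrableOn
      (Filter.Eventually.of_forall hg_nonneg) (HasSubset.Subset.eventuallyLE hsub)
  have hIb_le : (∫ y in ball (0:E) (t⁻¹ * R), g y) ≤ If :=
    setIntegral_le_integral hg_int (Filter.Eventually.of_forall hg_nonneg)
  constructor
  · have hCI : C⁻¹ ≤ I1 := by
      have h1 : I1⁻¹ ≤ C := le_trans (le_max_right _ _) (le_max_right _ _)
      calc C⁻¹ ≤ (I1⁻¹)⁻¹ := by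
            apply inv_anti₀ (by positivity) h1
        _ = I1 := inv_inv I1
    calc C⁻¹ * ε ^ θ ≤ I1 * ε ^ θ := by gcongr
      _ ≤ (∫ y in ball (0:E) (t⁻¹ * R), g y) * ε ^ θ := by gcongr
      _ = ε ^ θ * ∫ y in ball (0:E) (t⁻¹ * R), g y := mul_comm _ _
  · have hIfC : If ≤ C := le_trans (le_max_left _ _) (le_max_right _ _)
    calc ε ^ θ * (∫ y in ball (0:E) (t⁻¹ * R), g y) ≤ ε ^ θ * If := by gcongr
      _ ≤ ε ^ θ * C := mul_le_mul_of_nonneg_left hIfC hεθ.le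
      _ = C * ε ^ θ := mul_comm _ _
end

section
/- Let n ≥ 2 and m ≥ 2 be integers and 0 < r < R real numbers. There exist a constant C ≥ 1 and ε₀ ∈ (0,1) such that for all 0 < ε < ε₀, C⁻¹·ε^{1/m − 1} ≤ ∫_{{x' ∈ ℝ^{n−1} : r < |x'| < R}} 1 / (ε + (|x'| − r)^m) dx' ≤ C·ε^{1/m − 1}. -/
/-!
In polar coordinates the integral becomes `c_n ∫_r^R t^(n-2) dt / (ε + (t - r)^m)`, and on
`[r, R]` the weight `t^(n-2)` lies between two positive constants. After the translation
`s = t - r`, the substitution `s = ε^(1/m) u` turns `∫_0^L ds / (ε + s^m)` into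
`ε^(1/m - 1) ∫_0^(L ε^(-1/m)) du / (1 + u^m)`. Once the upper limit is at least `1`, this last
integral lies in `[1/2, 2]`: the integrand is at least `1/2` on `[0, 1]`, at most `1` there, and
at most `u^(-m)` beyond, which has integral at most `1` over `[1, ∞)` because `m ≥ 2`.
-/

open MeasureTheory Set Metric

theorem setIntegral_annulus_fun_norm_addHaar {E F : Type*} [NormedAddCommGroup E]
    [NormedSpace ℝ E] [MeasurableSpace E] [BorelSpace E] [FiniteDimensional ℝ E] [Nontrivial E]
    [NormedAddCommGroup F] [NormedSpace ℝ F] (μ : Measure E) [μ.IsAddHaarMeasure] (f : ℝ → F)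
    {r : ℝ} (hr : 0 ≤ r) (R : ℝ) :
    ∫ x in {x : E | r < ‖x‖ ∧ ‖x‖ < R}, f ‖x‖ ∂μ =
      Module.finrank ℝ E • μ.real (ball 0 1) •
        ∫ t in Ioo r R, t ^ (Module.finrank ℝ E - 1) • f t := by
  have hann : {x : E | r < ‖x‖ ∧ ‖x‖ < R} = (‖·‖) ⁻¹' Ioo r R := rfl
  rw [hann, ← integral_indicator (measurableSet_Ioo.preimage continuous_norm.measurable)]
  have hcomp : ∀ x : E, ((‖·‖) ⁻¹' Ioo r R).indicator (fun x => f ‖x‖) x =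
      (Ioo r R).indicator f ‖x‖ := fun x => indicator_comp_right (‖·‖)
  have hpos : Ioo r R ⊆ Ioi 0 := fun t ht => hr.trans_lt ht.1
  simp_rw [hcomp, integral_fun_norm_addHaar μ, ← indicator_smul_apply (Ioo r R)
    (fun t : ℝ => t ^ (Module.finrank ℝ E - 1)) f, setIntegral_indicator measurableSet_Ioo,
    inter_eq_right.2 hpos]

theorem pow_mul_setIntegral_le_setIntegral_pow_mul {g : ℝ → ℝ} {r R : ℝ} (hr : 0 ≤ r)
    (hg : IntegrableOn g (Ioo r R)) (hg0 : ∀ t ∈ Ioo r R, 0 ≤ g t) (k : ℕ) :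
    r ^ k * ∫ t in Ioo r R, g t ≤ ∫ t in Ioo r R, t ^ k * g t := by
  rw [← integral_const_mul]
  exact setIntegral_mono_on (hg.const_mul _)
    (hg.continuousOn_mul_of_subset (by fun_prop) isCompact_Icc measurableSet_Ioo
      Ioo_subset_Icc_self) measurableSet_Ioo fun t ht =>
      mul_le_mul_of_nonneg_right (pow_le_pow_left₀ hr ht.1.le k) (hg0 t ht)

theorem setIntegral_pow_mul_le_pow_mul_setIntegral {g : ℝ → ℝ} {r R : ℝ} (hr : 0 ≤ r)
    (hg : IntegrableOn g (Ioo r R)) (hg0 : ∀ t ∈ Ioo r R, 0 ≤ g t) (k : ℕ) :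
    ∫ t in Ioo r R, t ^ k * g t ≤ R ^ k * ∫ t in Ioo r R, g t := by
  rw [← integral_const_mul]
  exact setIntegral_mono_on
    (hg.continuousOn_mul_of_subset (by fun_prop) isCompact_Icc measurableSet_Ioo
      Ioo_subset_Icc_self)
    (hg.const_mul _) measurableSet_Ioo fun t ht =>
      mul_le_mul_of_nonneg_right (pow_le_pow_left₀ (hr.trans ht.1.le) ht.2.le k) (hg0 t ht)

theorem setIntegral_Ioo_comp_sub_right {F : Type*} [NormedAddCommGroup F] [NormedSpace ℝ F]
    (g : ℝ → F) {r R : ℝ} (hrR : r ≤ R) :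
    ∫ t in Ioo r R, g (t - r) = ∫ s in 0..R - r, g s := by
  rw [← integral_Ioc_eq_integral_Ioo, ← intervalIntegral.integral_of_le hrR,
    intervalIntegral.integral_comp_sub_right, sub_self]

theorem continuousOn_one_div_add_pow {c : ℝ} (hc : 0 < c) (m : ℕ) :
    ContinuousOn (fun u : ℝ => 1 / (c + u ^ m)) (Ici 0) :=
  continuousOn_const.div (by fun_prop) fun u (hu : 0 ≤ u) => by positivity

theorem intervalIntegrable_one_div_add_pow {c : ℝ} (hc : 0 < c) (m : ℕ) {a b : ℝ} (ha : 0 ≤ a)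
    (hab : a ≤ b) : IntervalIntegrable (fun u : ℝ => 1 / (c + u ^ m)) volume a b :=
  ((continuousOn_one_div_add_pow hc m).mono
    (Icc_subset_Ici_self.trans (Ici_subset_Ici.2 ha))).intervalIntegrable_of_Icc hab

theorem intervalIntegral_one_div_add_pow_eq {m : ℕ} (hm : m ≠ 0) {ε : ℝ} (hε : 0 < ε) (L : ℝ) :
    ∫ s in 0..L, 1 / (ε + s ^ m) =
      ε ^ ((1 : ℝ) / m - 1) * ∫ u in 0..L / ε ^ ((1 : ℝ) / m), 1 / (1 + u ^ m) := by
  set δ := ε ^ ((1 : ℝ) / m)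
  have hδ : 0 < δ := Real.rpow_pos_of_pos hε _
  have hδm : δ ^ m = ε := by simp only [δ, one_div]; exact Real.rpow_inv_natCast_pow hε.le hm
  have hrescale : ∀ u : ℝ, 1 / (ε + (δ * u) ^ m) = ε⁻¹ * (1 / (1 + u ^ m)) := fun u => by
    rw [mul_pow, hδm]; field_simp
  have h := intervalIntegral.integral_comp_mul_left (fun s => 1 / (ε + s ^ m)) hδ.ne'
    (a := 0) (b := L / δ)
  simp only [hrescale, intervalIntegral.integral_const_mul, mul_zero, mul_div_cancel₀ L hδ.ne',
    smul_eq_mul] at h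
  rw [Real.rpow_sub_one hε.ne', div_eq_mul_inv (ε ^ _) ε, mul_assoc, h, ← mul_assoc,
    mul_inv_cancel₀ hδ.ne', one_mul]

theorem one_half_le_intervalIntegral_one_div_one_add_pow (m : ℕ) {M : ℝ} (hM : 1 ≤ M) :
    1 / 2 ≤ ∫ u in 0..M, 1 / (1 + u ^ m) := by
  calc (1 : ℝ) / 2 = ∫ _ in (0 : ℝ)..1, (1 : ℝ) / 2 := by simp
    _ ≤ ∫ u in 0..1, 1 / (1 + u ^ m) :=
      intervalIntegral.integral_mono_on zero_le_one intervalIntegrable_const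
        (intervalIntegrable_one_div_add_pow one_pos m le_rfl zero_le_one) fun u hu => by
          have : u ^ m ≤ 1 := pow_le_one₀ hu.1 hu.2
          have : 0 ≤ u ^ m := pow_nonneg hu.1 m
          rw [div_le_div_iff₀ two_pos (by positivity)]; linarith
    _ ≤ ∫ u in 0..M, 1 / (1 + u ^ m) :=
      intervalIntegral.integral_mono_interval le_rfl zero_le_one hM
        (ae_restrict_of_forall_mem measurableSet_Ioc fun u hu => by
          have := hu.1.le; positivity)
        (intervalIntegrable_one_div_add_pow one_pos m le_rfl (zero_le_one.trans hM))

theorem intervalIntegral_one_div_one_add_pow_le_two {m : ℕ} (hm : 2 ≤ m) {M : ℝ} (hM : 1 ≤ M) :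
    ∫ u in 0..M, 1 / (1 + u ^ m) ≤ 2 := by
  have hhead_int := intervalIntegrable_one_div_add_pow one_pos m le_rfl zero_le_one
  have htail_int := intervalIntegrable_one_div_add_pow one_pos m zero_le_one hM
  have hnum : (2 : ℝ) ≤ m := by exact_mod_cast hm
  have h0 : (0 : ℝ) ∉ uIcc 1 M := by rw [uIcc_of_le hM]; exact fun h => by linarith [h.1]
  have hhead : ∫ u in 0..1, 1 / (1 + u ^ m) ≤ 1 := by
    simpa using intervalIntegral.integral_mono_on zero_le_one hhead_int
      intervalIntegrable_const fun u hu =>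
        (div_le_one (by have := hu.1; positivity)).2
          (le_add_of_nonneg_right (pow_nonneg hu.1 m))
  have htail : ∫ u in 1..M, 1 / (1 + u ^ m) ≤ 1 := calc
    _ ≤ ∫ u in 1..M, u ^ (-(m : ℝ)) :=
      intervalIntegral.integral_mono_on hM htail_int
        (intervalIntegral.intervalIntegrable_rpow (Or.inr h0)) fun u hu => by
          have hu0 : 0 < u := zero_lt_one.trans_le hu.1
          rw [Real.rpow_neg hu0.le, Real.rpow_natCast, one_div]
          exact inv_anti₀ (pow_pos hu0 m) (le_add_of_nonneg_left zero_le_one)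
    _ = (M ^ (-(m : ℝ) + 1) - 1) / (-(m : ℝ) + 1) := by
      rw [integral_rpow (Or.inr ⟨by linarith, h0⟩), Real.one_rpow]
    _ ≤ 1 := by
      rw [div_le_one_of_neg (by linarith)]
      linarith [Real.rpow_pos_of_pos (zero_lt_one.trans_le hM) (-(m : ℝ) + 1)]
  rw [← intervalIntegral.integral_add_adjacent_intervals hhead_int
    htail_int]
  linarith

theorem intervalIntegral_one_div_add_pow_mem_Icc {m : ℕ} (hm : 2 ≤ m) {ε L : ℝ} (hε : 0 < ε)
    (hL : 0 ≤ L) (hεL : ε ≤ L ^ m) :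
    ∫ s in 0..L, 1 / (ε + s ^ m) ∈
      Icc (1 / 2 * ε ^ ((1 : ℝ) / m - 1)) (2 * ε ^ ((1 : ℝ) / m - 1)) := by
  have hm0 : m ≠ 0 := by omega
  have hδ : 0 < ε ^ ((1 : ℝ) / m) := Real.rpow_pos_of_pos hε _
  have hδL : ε ^ ((1 : ℝ) / m) ≤ L := le_of_pow_le_pow_left₀ hm0 hL <| by
    rwa [one_div, Real.rpow_inv_natCast_pow hε.le hm0]
  have hM : 1 ≤ L / ε ^ ((1 : ℝ) / m) := (one_le_div hδ).2 hδL
  rw [intervalIntegral_one_div_add_pow_eq hm0 hε, mul_comm (1 / 2 : ℝ), mul_comm (2 : ℝ)]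
  have hp : 0 < ε ^ ((1 : ℝ) / m - 1) := Real.rpow_pos_of_pos hε _
  exact ⟨by gcongr; exact one_half_le_intervalIntegral_one_div_one_add_pow m hM,
    by gcongr; exact intervalIntegral_one_div_one_add_pow_le_two hm hM⟩

theorem setIntegral_pow_mul_one_div_add_sub_pow_mem_Icc {m : ℕ} (hm : 2 ≤ m) {ε r R : ℝ}
    (hε : 0 < ε) (hr : 0 ≤ r) (hrR : r ≤ R) (hεR : ε ≤ (R - r) ^ m) (k : ℕ) :
    ∫ t in Ioo r R, t ^ k * (1 / (ε + (t - r) ^ m)) ∈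
      Icc (r ^ k / 2 * ε ^ ((1 : ℝ) / m - 1)) (2 * R ^ k * ε ^ ((1 : ℝ) / m - 1)) := by
  set g : ℝ → ℝ := fun t => 1 / (ε + (t - r) ^ m)
  have hg0 : ∀ t ∈ Ioo r R, 0 ≤ g t := fun t ht => by
    have := sub_nonneg.2 ht.1.le; positivity
  have hg : IntegrableOn g (Ioo r R) :=
    ((continuousOn_one_div_add_pow hε m).comp (continuous_sub_right r).continuousOn
      fun t ht => sub_nonneg.2 ht.1).integrableOn_Icc.mono_set Ioo_subset_Icc_self
  obtain ⟨hJ₁, hJ₂⟩ : ∫ t in Ioo r R, g t ∈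
      Icc (1 / 2 * ε ^ ((1 : ℝ) / m - 1)) (2 * ε ^ ((1 : ℝ) / m - 1)) := by
    rw [setIntegral_Ioo_comp_sub_right (fun s => 1 / (ε + s ^ m)) hrR]
    exact intervalIntegral_one_div_add_pow_mem_Icc hm hε (sub_nonneg.2 hrR) hεR
  have hR : 0 ≤ R := hr.trans hrR
  constructor
  · calc r ^ k / 2 * ε ^ ((1 : ℝ) / m - 1) = r ^ k * (1 / 2 * ε ^ ((1 : ℝ) / m - 1)) := by ring
      _ ≤ r ^ k * ∫ t in Ioo r R, g t := by gcongr
      _ ≤ _ := pow_mul_setIntegral_le_setIntegral_pow_mul hr hg hg0 k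
  · calc _ ≤ R ^ k * ∫ t in Ioo r R, g t := setIntegral_pow_mul_le_pow_mul_setIntegral hr hg hg0 k
      _ ≤ R ^ k * (2 * ε ^ ((1 : ℝ) / m - 1)) := by gcongr
      _ = 2 * R ^ k * ε ^ ((1 : ℝ) / m - 1) := by ring

theorem exists_one_le_inv_le_and_le {A B : ℝ} (hA : 0 < A) :
    ∃ C : ℝ, 1 ≤ C ∧ C⁻¹ ≤ A ∧ B ≤ C :=
  ⟨max 1 (max A⁻¹ B), le_max_left _ _,
    (inv_anti₀ (inv_pos.2 hA) ((le_max_left _ _).trans (le_max_right _ _))).trans_eq (inv_inv A),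
    (le_max_right _ _).trans (le_max_right _ _)⟩

/-- For integers `n ≥ 2`, `m ≥ 2` and reals `0 < r < R`, there are
`C ≥ 1` and `ε₀ ∈ (0,1)` such that for all `0 < ε < ε₀`,
`C⁻¹ ε^{1/m − 1} ≤ ∫_{r < |x'| < R} dx'/(ε + (|x'| − r)^m) ≤ C ε^{1/m − 1}`. -/
theorem annulus_integral_estimate (n m : ℕ) (hn : 2 ≤ n) (hm : 2 ≤ m)
    (r R : ℝ) (hr : 0 < r) (hrR : r < R) :
    ∃ C : ℝ, 1 ≤ C ∧ ∃ ε₀ : ℝ, 0 < ε₀ ∧ ε₀ < 1 ∧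
      ∀ ε : ℝ, 0 < ε → ε < ε₀ →
        C⁻¹ * ε ^ ((1 : ℝ) / m - 1)
            ≤ ∫ x in {x : EuclideanSpace ℝ (Fin (n - 1)) | r < ‖x‖ ∧ ‖x‖ < R},
                1 / (ε + (‖x‖ - r) ^ m)
        ∧ (∫ x in {x : EuclideanSpace ℝ (Fin (n - 1)) | r < ‖x‖ ∧ ‖x‖ < R},
                1 / (ε + (‖x‖ - r) ^ m))
            ≤ C * ε ^ ((1 : ℝ) / m - 1) := by
  have : Nonempty (Fin (n - 1)) := ⟨⟨0, by omega⟩⟩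
  set c : ℝ := (n - 1 : ℕ) * volume.real (ball (0 : EuclideanSpace ℝ (Fin (n - 1))) 1)
  have hc : 0 < c := mul_pos (by norm_cast; omega)
    (ENNReal.toReal_pos (measure_ball_pos volume _ one_pos).ne' measure_ball_lt_top.ne)
  obtain ⟨C, hC1, hCA, hCB⟩ := exists_one_le_inv_le_and_le
    (A := c * (r ^ (n - 1 - 1) / 2)) (B := c * (2 * R ^ (n - 1 - 1))) (by positivity)
  refine ⟨C, hC1, min (1 / 2) ((R - r) ^ m), by have := sub_pos.2 hrR; positivity,
    (min_le_left _ _).trans_lt (by norm_num), fun ε hε hε₀ => ?_⟩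
  obtain ⟨hK₁, hK₂⟩ := setIntegral_pow_mul_one_div_add_sub_pow_mem_Icc hm hε hr.le hrR.le
    (hε₀.trans_le (min_le_right _ _)).le (n - 1 - 1)
  rw [setIntegral_annulus_fun_norm_addHaar volume (fun t => 1 / (ε + (t - r) ^ m)) hr.le R,
    finrank_euclideanSpace_fin]
  simp only [nsmul_eq_mul, smul_eq_mul, ← mul_assoc]
  have hp : 0 < ε ^ ((1 : ℝ) / m - 1) := Real.rpow_pos_of_pos hε _
  constructor
  · calc C⁻¹ * ε ^ ((1 : ℝ) / m - 1) ≤ c * (r ^ (n - 1 - 1) / 2) * ε ^ ((1 : ℝ) / m - 1) := by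
          gcongr
      _ ≤ _ := by rw [mul_assoc]; gcongr
  · calc _ ≤ c * (2 * R ^ (n - 1 - 1) * ε ^ ((1 : ℝ) / m - 1)) := by gcongr
      _ ≤ C * ε ^ ((1 : ℝ) / m - 1) := by rw [← mul_assoc]; gcongr
end

section
/- (First Korn inequality.) Let n ≥ 1 be an integer and let w : ℝⁿ → ℝⁿ be a continuously differentiable map with compact support. Then ∫_{ℝⁿ} |∇w(x)|² dx ≤ 2 ∫_{ℝⁿ} |e(w)(x)|² dx, where e(w)(x) = (∇w(x) + (∇w(x))ᵀ)/2 is the strain tensor and |A|² = Σ_{i,j} A_{ij}² denotes the squared Frobenius norm of a matrix A. -/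
/-!
Expanding the square gives the pointwise identity
`2 |e(w)|² = |∇w|² + ∑ᵢⱼ ∂ⱼwᵢ ∂ᵢwⱼ`, so it suffices that the cross term has nonnegative
integral. Integrating by parts twice, `∫ ∂ⱼwᵢ ∂ᵢwⱼ = ∫ ∂ᵢwᵢ ∂ⱼwⱼ`, hence the cross term
integrates to `∫ (div w)² ≥ 0`. Since `w` is only `C¹`, the double integration by parts is
carried out on difference quotients `(wⱼ(x + t eᵢ) - wⱼ(x)) / t`, and the limit `t → 0⁺` is taken
by dominated convergence, `wⱼ` being Lipschitz.
-/

open MeasureTheory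

theorem HasCompactSupport.integrable_mul_of_continuous {X : Type*} [TopologicalSpace X]
    [MeasurableSpace X] [OpensMeasurableSpace X] {μ : Measure X} [IsFiniteMeasureOnCompacts μ]
    {f g : X → ℝ} (hfs : HasCompactSupport f) (hf : Continuous f) (hg : Continuous g) :
    Integrable (fun x ↦ f x * g x) μ :=
  (hf.mul hg).integrable_of_hasCompactSupport hfs.mul_right

theorem ContDiff.continuous_fderiv_apply_const {E F : Type*} [NormedAddCommGroup E]
    [NormedSpace ℝ E] [NormedAddCommGroup F] [NormedSpace ℝ F] {n : WithTop ℕ∞} {f : E → F}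
    (hf : ContDiff ℝ n f) (hn : n ≠ 0) (v : E) : Continuous fun x ↦ fderiv ℝ f x v :=
  (hf.continuous_fderiv hn).clm_apply continuous_const

section HaarMeasure

variable {E : Type*} [NormedAddCommGroup E] [NormedSpace ℝ E] [FiniteDimensional ℝ E]
  [MeasurableSpace E] [BorelSpace E] {μ : Measure E} [μ.IsAddHaarMeasure]

theorem integral_fderiv_mul_eq_neg_mul_fderiv {f g : E → ℝ} (hf : ContDiff ℝ 1 f)
    (hfs : HasCompactSupport f) (hg : ContDiff ℝ 1 g) (p : E) :
    ∫ x, fderiv ℝ f x p * g x ∂μ = -∫ x, f x * fderiv ℝ g x p ∂μ := by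
  rw [integral_mul_fderiv_eq_neg_fderiv_mul_of_integrable, neg_neg]
  · exact (hfs.fderiv_apply ℝ p).integrable_mul_of_continuous
      (hf.continuous_fderiv_apply_const one_ne_zero p) hg.continuous
  · exact hfs.integrable_mul_of_continuous hf.continuous
      (hg.continuous_fderiv_apply_const one_ne_zero p)
  · exact hfs.integrable_mul_of_continuous hf.continuous hg.continuous
  · exact fun x _ ↦ hf.differentiable one_ne_zero x
  · exact fun x _ ↦ hg.differentiable one_ne_zero x

theorem integral_sub_translate_mul_fderiv {u v : E → ℝ} (hu : ContDiff ℝ 1 u)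
    (hus : HasCompactSupport u) (hv : ContDiff ℝ 1 v) (a p : E) :
    ∫ x, (v (x + a) - v x) * fderiv ℝ u x p ∂μ = -∫ x, (u (x - a) - u x) * fderiv ℝ v x p ∂μ := by
  have hva : ContDiff ℝ 1 fun x ↦ v (x + a) := hv.comp (contDiff_id.add contDiff_const)
  have hv' := hv.continuous_fderiv_apply_const one_ne_zero p
  have hderiv : ∀ x, fderiv ℝ (fun y ↦ v (y + a) - v y) x p
      = fderiv ℝ v (x + a) p - fderiv ℝ v x p := fun x ↦ by
    rw [fderiv_fun_sub (hva.differentiable one_ne_zero x) (hv.differentiable one_ne_zero x),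
      fderiv_comp_add_right]
    rfl
  have htranslate : ∫ x, u x * fderiv ℝ v (x + a) p ∂μ = ∫ x, u (x - a) * fderiv ℝ v x p ∂μ := by
    simpa using (integral_sub_right_eq_self (μ := μ) (fun x ↦ u x * fderiv ℝ v (x + a) p) a).symm
  calc ∫ x, (v (x + a) - v x) * fderiv ℝ u x p ∂μ
      = ∫ x, fderiv ℝ u x p * (v (x + a) - v x) ∂μ := by simp only [mul_comm (v _ - v _)]
    _ = -∫ x, u x * (fderiv ℝ v (x + a) p - fderiv ℝ v x p) ∂μ := by
      rw [integral_fderiv_mul_eq_neg_mul_fderiv hu hus (hva.sub hv)]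
      simp only [hderiv]
    _ = -∫ x, (u (x - a) - u x) * fderiv ℝ v x p ∂μ := by
      simp only [mul_sub, sub_mul]
      rw [integral_sub, integral_sub, htranslate]
      · exact (hus.comp_homeomorph (Homeomorph.subRight a)).integrable_mul_of_continuous
          (hu.continuous.comp (continuous_sub_right a)) hv'
      · exact hus.integrable_mul_of_continuous hu.continuous hv'
      · exact hus.integrable_mul_of_continuous hu.continuous (hv'.comp (continuous_add_const a))
      · exact hus.integrable_mul_of_continuous hu.continuous hv'

/-- Take `a = t • q` in `integral_sub_translate_mul_fderiv`, divide by `t` and let `t → 0⁺`: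
both sides are integrals of difference quotients of a Lipschitz function against a continuous
one, which converge by dominated convergence. -/
theorem integral_fderiv_mul_fderiv_comm {u v : E → ℝ} (hu : ContDiff ℝ 1 u)
    (hus : HasCompactSupport u) (hv : ContDiff ℝ 1 v) (hvs : HasCompactSupport v) (p q : E) :
    ∫ x, fderiv ℝ u x p * fderiv ℝ v x q ∂μ = ∫ x, fderiv ℝ u x q * fderiv ℝ v x p ∂μ := by
  obtain ⟨Cu, hLu⟩ := hu.lipschitzWith_of_hasCompactSupport hus one_ne_zero
  obtain ⟨Cv, hLv⟩ := hv.lipschitzWith_of_hasCompactSupport hvs one_ne_zero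
  have hlimv := hLv.integral_inv_smul_sub_mul_tendsto_integral_lineDeriv_mul' (μ := μ) hvs
    (hu.continuous_fderiv_apply_const one_ne_zero p) q
  have hlimu := hLu.integral_inv_smul_sub_mul_tendsto_integral_lineDeriv_mul' (μ := μ) hus
    (hv.continuous_fderiv_apply_const one_ne_zero p) (-q)
  have hslopes : ∀ t : ℝ, ∫ x, (t⁻¹ • (v (x + t • q) - v x)) * fderiv ℝ u x p ∂μ
      = -∫ x, (t⁻¹ • (u (x + t • -q) - u x)) * fderiv ℝ v x p ∂μ := fun t ↦ by
    simp only [smul_eq_mul, mul_assoc, integral_const_mul, smul_neg, ← sub_eq_add_neg,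
      integral_sub_translate_mul_fderiv hu hus hv, mul_neg]
  have hlines := tendsto_nhds_unique hlimv ((funext hslopes ▸ hlimu.neg :))
  simp only [(hu.differentiable one_ne_zero _).lineDeriv_eq_fderiv,
    (hv.differentiable one_ne_zero _).lineDeriv_eq_fderiv, map_neg, neg_mul, integral_neg,
    neg_neg] at hlines
  simpa only [mul_comm] using hlines

end HaarMeasure

theorem integral_sum_sum {α ι κ : Type*} [MeasurableSpace α] {μ : Measure α} (s : Finset ι)
    (t : Finset κ) {f : ι → κ → α → ℝ} (hf : ∀ i j, Integrable (f i j) μ) :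
    ∫ a, ∑ i ∈ s, ∑ j ∈ t, f i j a ∂μ = ∑ i ∈ s, ∑ j ∈ t, ∫ a, f i j a ∂μ := by
  rw [integral_finsetSum s fun i _ ↦ integrable_finsetSum t fun j _ ↦ hf i j]
  exact Finset.sum_congr rfl fun i _ ↦ integral_finsetSum t fun j _ ↦ hf i j

theorem two_mul_sum_sq_half_add_transpose {ι : Type*} [Fintype ι] (A : ι → ι → ℝ) :
    2 * ∑ i, ∑ j, ((A i j + A j i) / 2) ^ 2 = ∑ i, ∑ j, A i j ^ 2 + ∑ i, ∑ j, A i j * A j i := by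
  have htranspose : ∑ i, ∑ j, A j i ^ 2 = ∑ i, ∑ j, A i j ^ 2 := Finset.sum_comm
  calc 2 * ∑ i, ∑ j, ((A i j + A j i) / 2) ^ 2
      = ∑ i, ∑ j, (A i j ^ 2 / 2 + A j i ^ 2 / 2 + A i j * A j i) := by
        simp only [Finset.mul_sum]
        exact Finset.sum_congr rfl fun i _ ↦ Finset.sum_congr rfl fun j _ ↦ by ring
    _ = ∑ i, ∑ j, A i j ^ 2 + ∑ i, ∑ j, A i j * A j i := by
        simp only [Finset.sum_add_distrib, ← Finset.sum_div, htranspose]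
        ring

section Coordinates

variable {ι : Type*} [Fintype ι] {w : (ι → ℝ) → ι → ℝ}

theorem integrable_fderiv_apply_mul_fderiv_apply {μ : Measure (ι → ℝ)}
    [IsFiniteMeasureOnCompacts μ] (hw : ContDiff ℝ 1 w) (hws : HasCompactSupport w)
    (p q : ι → ℝ) (i j : ι) : Integrable (fun x ↦ fderiv ℝ w x p i * fderiv ℝ w x q j) μ := by
  have hcont : ∀ p i, Continuous fun x ↦ fderiv ℝ w x p i := fun p i ↦
    (continuous_apply i).comp (hw.continuous_fderiv_apply_const one_ne_zero p)
  have hsupp : HasCompactSupport fun x ↦ fderiv ℝ w x p i :=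
    (hws.fderiv_apply ℝ p).comp_left (g := fun y : ι → ℝ ↦ y i) rfl
  exact hsupp.integrable_mul_of_continuous (hcont p i) (hcont q j)

/-- After swapping derivatives, the cross term `∫ ∑ᵢⱼ ∂ⱼwᵢ ∂ᵢwⱼ` is `∫ (div w)²`. -/
theorem integral_sum_fderiv_mul_fderiv_transpose_nonneg [DecidableEq ι] {μ : Measure (ι → ℝ)}
    [μ.IsAddHaarMeasure] (hw : ContDiff ℝ 1 w) (hws : HasCompactSupport w) :
    0 ≤ ∫ x, ∑ i, ∑ j, fderiv ℝ w x (Pi.single j 1) i * fderiv ℝ w x (Pi.single i 1) j ∂μ := by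
  have hcoord : ∀ i, ContDiff ℝ 1 fun x ↦ w x i := contDiff_pi.1 hw
  have hcoords : ∀ i, HasCompactSupport fun x ↦ w x i := fun i ↦
    hws.comp_left (g := fun y : ι → ℝ ↦ y i) rfl
  have hpartial : ∀ x p i, fderiv ℝ w x p i = fderiv ℝ (fun y ↦ w y i) x p := fun x p i ↦ by
    rw [fderiv_apply (hw.differentiable one_ne_zero x) i]
    rfl
  have hint := integrable_fderiv_apply_mul_fderiv_apply (μ := μ) hw hws
  calc (0 : ℝ)
      ≤ ∫ x, (∑ i, fderiv ℝ w x (Pi.single i 1) i) ^ 2 ∂μ := integral_nonneg fun x ↦ sq_nonneg _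
    _ = ∑ i, ∑ j, ∫ x, fderiv ℝ w x (Pi.single i 1) i * fderiv ℝ w x (Pi.single j 1) j ∂μ := by
        simp only [sq, Finset.sum_mul_sum]
        exact integral_sum_sum _ _ fun i j ↦ hint _ _ _ _
    _ = ∑ i, ∑ j, ∫ x, fderiv ℝ w x (Pi.single j 1) i * fderiv ℝ w x (Pi.single i 1) j ∂μ := by
        simp only [hpartial]
        exact Finset.sum_congr rfl fun i _ ↦ Finset.sum_congr rfl fun j _ ↦
          integral_fderiv_mul_fderiv_comm (hcoord i) (hcoords i) (hcoord j) (hcoords j) _ _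
    _ = _ := (integral_sum_sum _ _ fun i j ↦ hint _ _ _ _).symm

end Coordinates

theorem first_korn_inequality_general (n : ℕ)
    (w : (Fin n → ℝ) → (Fin n → ℝ)) (hw : ContDiff ℝ 1 w)
    (hsupp : HasCompactSupport w) :
    (∫ x : Fin n → ℝ, ∑ i, ∑ j, (fderiv ℝ w x (Pi.single j 1) i) ^ 2)
      ≤ 2 * ∫ x : Fin n → ℝ, ∑ i, ∑ j,
          ((fderiv ℝ w x (Pi.single j 1) i + fderiv ℝ w x (Pi.single i 1) j) / 2) ^ 2 := by
  have hint := integrable_fderiv_apply_mul_fderiv_apply (μ := volume) hw hsupp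
  have hsq : Integrable (fun x ↦ ∑ i, ∑ j, fderiv ℝ w x (Pi.single j 1) i ^ 2) :=
    integrable_finsetSum _ fun i _ ↦ integrable_finsetSum _ fun j _ ↦ by
      simpa only [sq] using hint _ _ i i
  have hcross : Integrable fun x ↦
      ∑ i, ∑ j, fderiv ℝ w x (Pi.single j 1) i * fderiv ℝ w x (Pi.single i 1) j :=
    integrable_finsetSum _ fun i _ ↦ integrable_finsetSum _ fun j _ ↦ hint _ _ i j
  rw [← integral_const_mul]
  simp only [two_mul_sum_sq_half_add_transpose fun i j ↦ fderiv ℝ w _ (Pi.single j 1) i]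
  rw [integral_add hsq hcross]
  exact le_add_of_nonneg_right (integral_sum_fderiv_mul_fderiv_transpose_nonneg hw hsupp)

/-- **first Korn inequality.** For a `C¹` compactly supported map
`w : ℝⁿ → ℝⁿ`, `∫ |∇w|² ≤ 2 ∫ |e(w)|²`, where `e(w) = (∇w + (∇w)ᵀ)/2` and `|·|` is
the Frobenius norm. -/
theorem first_korn_inequality (n : ℕ) (hn : 1 ≤ n)
    (w : (Fin n → ℝ) → (Fin n → ℝ)) (hw : ContDiff ℝ 1 w)
    (hsupp : HasCompactSupport w) :
    (∫ x : Fin n → ℝ, ∑ i, ∑ j, (fderiv ℝ w x (Pi.single j 1) i) ^ 2)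
      ≤ 2 * ∫ x : Fin n → ℝ, ∑ i, ∑ j,
          ((fderiv ℝ w x (Pi.single j 1) i + fderiv ℝ w x (Pi.single i 1) j) / 2) ^ 2 :=
  first_korn_inequality_general n w hw hsupp
end
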